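/- Let S be a finite nonempty type, let γ ∈ [0,1), let N ≥ 1, and let T_1,…,T_N : Ω → (ℕ → S) be independent, identically distributed measurable random trajectories on a probability space Ω. Define the empirical discounted occupancy d_D : S → ℝ by d_D(s)(ω) = (1/N)·Σ_{i=1}^N Σ_{t≥0} γ^t·1[T_i(ω)(t) = s], and the expected discounted occupancy d : S → ℝ by d(s) = Σ_{t≥0} γ^t·P(T_1(t) = s). Then for every ε > 0, the probability that (1-γ)·Σ_{s∈S} |d(s) - d_D(s)| ≥ ε is at most (2^{|S|} - 2)·exp(-N·ε²/2). -/

import Mathlib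

/-!
Both `d` and `d_D` have total mass `(1 - γ)⁻¹`, so `x = (1 - γ) (d - d_D)` sums to zero and its
`ℓ¹` norm is twice its sum over `A = {x > 0}`, a nonempty proper subset of `S`. For a fixed `A`,
`(1 - γ) ∑_{s ∈ A} d_D(s)` is the mean of the `N` i.i.d. `[0, 1]`-valued variables
`(1 - γ) occ_A(T_i)`, whose expectation is `(1 - γ) ∑_{s ∈ A} d(s)`, where `occ_A` is the
discounted time spent in `A`. Hoeffding's inequality bounds the probability of a deviation
`ε / 2` by `exp (-N ε² / 2)`, and a union bound over the `2 ^ |S| - 2` candidate sets `A` gives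
the theorem.
-/

open MeasureTheory ProbabilityTheory Finset Real

section Hoeffding

variable {Ω ι : Type*} [MeasurableSpace Ω] {μ : Measure Ω} [IsProbabilityMeasure μ]

lemma measureReal_sum_integral_sub_ge_le_of_mem_Icc {X : ι → Ω → ℝ}
    (h_indep : iIndepFun X μ) (h_meas : ∀ i, Measurable (X i))
    (h_mem : ∀ i ω, X i ω ∈ Set.Icc (0 : ℝ) 1) (s : Finset ι) {ε : ℝ} (hε : 0 ≤ ε) :
    μ.real {ω | ε ≤ ∑ i ∈ s, (μ[X i] - X i ω)} ≤ exp (-2 * ε ^ 2 / #s) := by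
  have h_subG : ∀ i ∈ s, HasSubgaussianMGF (fun ω ↦ μ[X i] - X i ω) (1 / 4) μ := by
    intro i _
    convert (hasSubgaussianMGF_of_mem_Icc (h_meas i).aemeasurable
      (ae_of_all μ (h_mem i))).neg using 1
    · ext ω
      simp
    · norm_num
  have h_indep' : iIndepFun (fun i ω ↦ μ[X i] - X i ω) μ :=
    h_indep.comp (fun i (y : ℝ) ↦ (∫ ω, X i ω ∂μ) - y) fun _ ↦ by fun_prop
  refine (HasSubgaussianMGF.measure_sum_ge_le_of_iIndepFun h_indep' h_subG hε).trans_eq ?_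
  push_cast
  simp only [sum_const, nsmul_eq_mul]
  ring_nf

end Hoeffding

section DiscountedOccupancy

variable {S : Type*} [DecidableEq S] {γ : ℝ}

noncomputable def discountedOccupancy (γ : ℝ) (A : Finset S) (τ : ℕ → S) : ℝ :=
  ∑' t, γ ^ t * if τ t ∈ A then 1 else 0

lemma pow_mul_ite_one_zero_le (hγ0 : 0 ≤ γ) (t : ℕ) (p : Prop) [Decidable p] :
    γ ^ t * (if p then 1 else 0) ≤ γ ^ t := by
  split_ifs <;> simp [pow_nonneg hγ0]

lemma summable_pow_mul_ite_one_zero (hγ0 : 0 ≤ γ) (hγ1 : γ < 1) (p : ℕ → Prop)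
    [DecidablePred p] : Summable fun t ↦ γ ^ t * if p t then (1 : ℝ) else 0 :=
  (summable_geometric_of_lt_one hγ0 hγ1).of_nonneg_of_le (fun t ↦ by positivity)
    fun t ↦ pow_mul_ite_one_zero_le hγ0 t (p t)

lemma discountedOccupancy_mem_Icc (hγ0 : 0 ≤ γ) (hγ1 : γ < 1) (A : Finset S) (τ : ℕ → S) :
    discountedOccupancy γ A τ ∈ Set.Icc 0 (1 - γ)⁻¹ := by
  refine ⟨tsum_nonneg fun t ↦ by positivity, ?_⟩
  rw [← tsum_geometric_of_lt_one hγ0 hγ1]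
  exact (summable_pow_mul_ite_one_zero hγ0 hγ1 _).tsum_le_tsum
    (pow_mul_ite_one_zero_le hγ0 · _) (summable_geometric_of_lt_one hγ0 hγ1)

lemma discountedOccupancy_univ [Fintype S] (hγ0 : 0 ≤ γ) (hγ1 : γ < 1) (τ : ℕ → S) :
    discountedOccupancy γ univ τ = (1 - γ)⁻¹ := by
  simp [discountedOccupancy, tsum_geometric_of_lt_one hγ0 hγ1]

lemma sum_discountedOccupancy_singleton (hγ0 : 0 ≤ γ) (hγ1 : γ < 1) (A : Finset S)
    (τ : ℕ → S) : ∑ s ∈ A, discountedOccupancy γ {s} τ = discountedOccupancy γ A τ := by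
  simp only [discountedOccupancy, mem_singleton]
  rw [← Summable.tsum_finsetSum fun s _ ↦ summable_pow_mul_ite_one_zero hγ0 hγ1 _]
  congr 1 with t
  rw [← mul_sum, sum_ite_eq A (τ t)]

variable [MeasurableSpace S] [MeasurableSingletonClass S]

lemma measurable_discountedOccupancy (hγ0 : 0 ≤ γ) (hγ1 : γ < 1) (A : Finset S) :
    Measurable (discountedOccupancy γ A) := by
  refine measurable_of_tendsto_metrizable
    (f := fun n τ ↦ ∑ t ∈ range n, γ ^ t * if τ t ∈ A then (1 : ℝ) else 0) (fun n ↦ ?_) ?_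
  · exact Finset.measurable_sum _ fun t _ ↦
      (Measurable.ite (measurable_pi_apply t A.measurableSet) measurable_const
        measurable_const).const_mul _
  · exact tendsto_pi_nhds.2 fun τ ↦
      (summable_pow_mul_ite_one_zero hγ0 hγ1 _).hasSum.tendsto_sum_nat

variable {Ω : Type*} [MeasurableSpace Ω] {μ : Measure Ω}

lemma integrable_discountedOccupancy_comp [IsFiniteMeasure μ] (hγ0 : 0 ≤ γ) (hγ1 : γ < 1)
    {T : Ω → ℕ → S} (hT : AEMeasurable T μ) (A : Finset S) :
    Integrable (fun ω ↦ discountedOccupancy γ A (T ω)) μ :=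
  .of_mem_Icc 0 (1 - γ)⁻¹ ((measurable_discountedOccupancy hγ0 hγ1 A).comp_aemeasurable hT)
    (ae_of_all μ fun ω ↦ discountedOccupancy_mem_Icc hγ0 hγ1 A (T ω))

lemma integral_discountedOccupancy_comp [IsFiniteMeasure μ] (hγ0 : 0 ≤ γ) (hγ1 : γ < 1)
    {T : Ω → ℕ → S} (hT : Measurable T) (A : Finset S) :
    ∫ ω, discountedOccupancy γ A (T ω) ∂μ = ∑' t, γ ^ t * μ.real {ω | T ω t ∈ A} := by
  have h_set (t : ℕ) : MeasurableSet {ω | T ω t ∈ A} :=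
    (measurable_pi_apply t).comp hT A.measurableSet
  have h_ind (t : ℕ) :
      (fun ω ↦ if T ω t ∈ A then (1 : ℝ) else 0) = {ω | T ω t ∈ A}.indicator 1 := by
    ext ω
    simp [Set.indicator_apply]
  have h_int (t : ℕ) : ∫ ω, γ ^ t * (if T ω t ∈ A then (1 : ℝ) else 0) ∂μ =
      γ ^ t * μ.real {ω | T ω t ∈ A} := by
    rw [integral_const_mul, h_ind, integral_indicator_one (h_set t)]
  have h_int_norm (t : ℕ) : ∫ ω, ‖γ ^ t * (if T ω t ∈ A then (1 : ℝ) else 0)‖ ∂μ =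
      γ ^ t * μ.real {ω | T ω t ∈ A} := by
    rw [← h_int]
    congr 1 with ω
    exact Real.norm_of_nonneg (by positivity)
  simp only [discountedOccupancy]
  rw [← integral_tsum_of_summable_integral_norm, funext h_int]
  · exact fun t ↦ (h_ind t ▸ (integrable_const 1).indicator (h_set t)).const_mul _
  · rw [funext h_int_norm]
    refine ((summable_geometric_of_lt_one hγ0 hγ1).mul_right (μ.real Set.univ)).of_nonneg_of_le
      (fun t ↦ by positivity) fun t ↦ ?_
    exact mul_le_mul_of_nonneg_left (measureReal_mono (Set.subset_univ _)) (by positivity)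

lemma sum_integral_discountedOccupancy_singleton [IsFiniteMeasure μ] (hγ0 : 0 ≤ γ)
    (hγ1 : γ < 1) {T : Ω → ℕ → S} (hT : AEMeasurable T μ) (A : Finset S) :
    ∑ s ∈ A, ∫ ω, discountedOccupancy γ {s} (T ω) ∂μ = ∫ ω, discountedOccupancy γ A (T ω) ∂μ := by
  rw [← integral_finsetSum _ fun s _ ↦ integrable_discountedOccupancy_comp hγ0 hγ1 hT _]
  simp_rw [sum_discountedOccupancy_singleton hγ0 hγ1]

lemma sum_integral_sub_empirical_discountedOccupancy {ι : Type*} [Fintype ι] [Nonempty ι]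
    [IsFiniteMeasure μ] (hγ0 : 0 ≤ γ) (hγ1 : γ < 1)
    {T : ι → Ω → ℕ → S} {T₀ : Ω → ℕ → S} (h_ident : ∀ i, IdentDistrib (T i) T₀ μ μ)
    (A : Finset S) (ω : Ω) :
    ∑ s ∈ A, (∫ ω', discountedOccupancy γ {s} (T₀ ω') ∂μ -
      (Fintype.card ι : ℝ)⁻¹ * ∑ i, discountedOccupancy γ {s} (T i ω)) =
    (Fintype.card ι : ℝ)⁻¹ * ∑ i, (∫ ω', discountedOccupancy γ A (T i ω') ∂μ -
      discountedOccupancy γ A (T i ω)) := by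
  obtain ⟨i₀⟩ := ‹Nonempty ι›
  have h_int (i : ι) : ∫ ω', discountedOccupancy γ A (T i ω') ∂μ =
      ∫ ω', discountedOccupancy γ A (T₀ ω') ∂μ :=
    ((h_ident i).comp (measurable_discountedOccupancy hγ0 hγ1 A)).integral_eq
  rw [sum_sub_distrib, ← mul_sum, sum_comm,
    sum_integral_discountedOccupancy_singleton hγ0 hγ1 (h_ident i₀).aemeasurable_snd]
  simp_rw [sum_discountedOccupancy_singleton hγ0 hγ1, h_int, sum_sub_distrib, sum_const,
    card_univ, nsmul_eq_mul]
  field_simp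

lemma measureReal_sum_integral_sub_discountedOccupancy_ge_le {ι : Type*} [Fintype ι]
    [IsProbabilityMeasure μ] (hγ0 : 0 ≤ γ) (hγ1 : γ < 1) {T : ι → Ω → ℕ → S}
    (hT : ∀ i, Measurable (T i)) (h_indep : iIndepFun T μ) (A : Finset S) {δ : ℝ}
    (hδ : 0 ≤ δ) :
    μ.real {ω | δ ≤ (1 - γ) * ∑ i, (∫ ω', discountedOccupancy γ A (T i ω') ∂μ -
      discountedOccupancy γ A (T i ω))} ≤ exp (-2 * δ ^ 2 / Fintype.card ι) := by
  have h_occ := measurable_discountedOccupancy (S := S) hγ0 hγ1 A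
  have h_mem (i : ι) (ω : Ω) :
      (1 - γ) * discountedOccupancy γ A (T i ω) ∈ Set.Icc (0 : ℝ) 1 := by
    obtain ⟨h_nonneg, h_le⟩ := discountedOccupancy_mem_Icc hγ0 hγ1 A (T i ω)
    have hγ : 0 < 1 - γ := by linarith
    exact ⟨by positivity,
      (mul_le_mul_of_nonneg_left h_le hγ.le).trans_eq (mul_inv_cancel₀ hγ.ne')⟩
  have h := measureReal_sum_integral_sub_ge_le_of_mem_Icc
    (h_indep.comp (fun _ τ ↦ (1 - γ) * discountedOccupancy γ A τ) fun _ ↦ h_occ.const_mul _)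
    (fun i ↦ (h_occ.comp (hT i)).const_mul _) h_mem univ hδ
  simpa only [Function.comp_apply, integral_const_mul, ← mul_sub, ← mul_sum, card_univ] using h

end DiscountedOccupancy

section SubsetUnionBound

variable {S : Type*} [Fintype S]

lemma sum_filter_pos_eq_half_sum_abs {x : S → ℝ} (hx : ∑ s, x s = 0) :
    ∑ s with 0 < x s, x s = (∑ s, |x s|) / 2 := by
  have h_abs := sum_filter_add_sum_filter_not univ (fun s ↦ 0 < x s) fun s ↦ |x s|
  have h_sum := sum_filter_add_sum_filter_not univ (fun s ↦ 0 < x s) x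
  have h_pos : ∑ s with 0 < x s, |x s| = ∑ s with 0 < x s, x s :=
    sum_congr rfl fun s hs ↦ abs_of_pos (mem_filter.1 hs).2
  have h_nonpos : ∑ s with ¬0 < x s, |x s| = -∑ s with ¬0 < x s, x s := by
    rw [← sum_neg_distrib]
    exact sum_congr rfl fun s hs ↦ abs_of_nonpos (not_lt.1 (mem_filter.1 hs).2)
  linarith

lemma exists_nonempty_ne_univ_sum_eq_half_sum_abs {x : S → ℝ} (hx : ∑ s, x s = 0)
    (h_pos : 0 < ∑ s, |x s|) :
    ∃ A : Finset S, A.Nonempty ∧ A ≠ univ ∧ ∑ s ∈ A, x s = (∑ s, |x s|) / 2 := by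
  have h_half := sum_filter_pos_eq_half_sum_abs hx
  refine ⟨({s | 0 < x s} : Finset S), nonempty_of_sum_ne_zero (f := x) (by linarith),
    fun h_univ ↦ ?_, h_half⟩
  rw [h_univ, hx] at h_half
  linarith

variable [DecidableEq S]

lemma card_filter_nonempty_ne_univ [Nonempty S] :
    #{A : Finset S | A.Nonempty ∧ A ≠ univ} = 2 ^ Fintype.card S - 2 := by
  have h : ({A : Finset S | A.Nonempty ∧ A ≠ univ} : Finset _) = univ \ {∅, univ} := by
    ext A
    simp [nonempty_iff_ne_empty]
  rw [h, card_sdiff_of_subset (subset_univ _), card_pair univ_nonempty.ne_empty.symm,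
    card_univ, Fintype.card_finset]

lemma measure_sum_abs_ge_le_of_forall_nonempty_ne_univ [Nonempty S] {Ω : Type*}
    [MeasurableSpace Ω] {μ : Measure Ω} {x : Ω → S → ℝ} (hx : ∀ ω, ∑ s, x ω s = 0) {ε : ℝ}
    (hε : 0 < ε) {b : ENNReal}
    (h_subset : ∀ A : Finset S, A.Nonempty → A ≠ univ → μ {ω | ε / 2 ≤ ∑ s ∈ A, x ω s} ≤ b) :
    μ {ω | ε ≤ ∑ s, |x ω s|} ≤ (2 ^ Fintype.card S - 2 : ℕ) * b := by
  set 𝒜 : Finset (Finset S) := {A | A.Nonempty ∧ A ≠ univ}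
  have h_cover : {ω | ε ≤ ∑ s, |x ω s|} ⊆ ⋃ A ∈ 𝒜, {ω | ε / 2 ≤ ∑ s ∈ A, x ω s} := by
    intro ω (hω : ε ≤ _)
    obtain ⟨A, hA, hA', h_half⟩ :=
      exists_nonempty_ne_univ_sum_eq_half_sum_abs (hx ω) (hε.trans_le hω)
    refine Set.mem_biUnion (x := A) (by simp [𝒜, hA, hA']) ?_
    change ε / 2 ≤ _
    linarith
  calc μ {ω | ε ≤ ∑ s, |x ω s|}
      ≤ ∑ A ∈ 𝒜, μ {ω | ε / 2 ≤ ∑ s ∈ A, x ω s} :=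
        (measure_mono h_cover).trans (measure_biUnion_finset_le _ _)
    _ ≤ ∑ _A ∈ 𝒜, b := sum_le_sum fun A hA ↦ by
        simp only [𝒜, mem_filter] at hA
        exact h_subset A hA.2.1 hA.2.2
    _ = (2 ^ Fintype.card S - 2 : ℕ) * b := by
        rw [sum_const, nsmul_eq_mul, card_filter_nonempty_ne_univ]

end SubsetUnionBound

theorem measure_sum_abs_integral_sub_empirical_discountedOccupancy_ge_le {S Ω ι : Type*}
    [Fintype S] [Nonempty S] [DecidableEq S] [MeasurableSpace S] [MeasurableSingletonClass S]
    [MeasurableSpace Ω] {μ : Measure Ω} [IsProbabilityMeasure μ] [Fintype ι] [Nonempty ι]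
    {γ : ℝ} (hγ0 : 0 ≤ γ) (hγ1 : γ < 1) {T : ι → Ω → ℕ → S} (hT : ∀ i, Measurable (T i))
    (h_indep : iIndepFun T μ) {T₀ : Ω → ℕ → S} (h_ident : ∀ i, IdentDistrib (T i) T₀ μ μ)
    {ε : ℝ} (hε : 0 < ε) :
    μ {ω | ε ≤ ∑ s, |(1 - γ) * (∫ ω', discountedOccupancy γ {s} (T₀ ω') ∂μ -
      (Fintype.card ι : ℝ)⁻¹ * ∑ i, discountedOccupancy γ {s} (T i ω))|} ≤
    (2 ^ Fintype.card S - 2 : ℕ) * ENNReal.ofReal (exp (-(Fintype.card ι * ε ^ 2) / 2)) := by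
  have h_sum (A : Finset S) (ω : Ω) :
      ∑ s ∈ A, (1 - γ) * (∫ ω', discountedOccupancy γ {s} (T₀ ω') ∂μ -
        (Fintype.card ι : ℝ)⁻¹ * ∑ i, discountedOccupancy γ {s} (T i ω)) =
      (Fintype.card ι : ℝ)⁻¹ * ((1 - γ) * ∑ i, (∫ ω', discountedOccupancy γ A (T i ω') ∂μ -
        discountedOccupancy γ A (T i ω))) := by
    rw [← mul_sum, sum_integral_sub_empirical_discountedOccupancy hγ0 hγ1 h_ident]
    ring
  refine measure_sum_abs_ge_le_of_forall_nonempty_ne_univ (fun ω ↦ ?_) hε fun A _ _ ↦ ?_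
  · simp [h_sum, discountedOccupancy_univ hγ0 hγ1]
  · rw [← ofReal_measureReal]
    refine ENNReal.ofReal_le_ofReal ((measureReal_mono fun ω (hω : ε / 2 ≤ _) ↦ ?_).trans
      ((measureReal_sum_integral_sub_discountedOccupancy_ge_le hγ0 hγ1 hT h_indep A
        (δ := Fintype.card ι * (ε / 2)) (by positivity)).trans_eq ?_))
    · rwa [h_sum, le_inv_mul_iff₀ (by positivity)] at hω
    · field_simp

/-- Concentration of the empirical discounted occupancy of i.i.d.
trajectories around the expected discounted occupancy (Lemma 1 of the paper). -/
theorem empirical_discounted_occupancy_concentration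
    {S : Type*} [Fintype S] [Nonempty S] [DecidableEq S] [MeasurableSpace S]
    [MeasurableSingletonClass S]
    {Ω : Type*} [MeasurableSpace Ω] (μ : Measure Ω) [IsProbabilityMeasure μ]
    (γ : ℝ) (hγ0 : 0 ≤ γ) (hγ1 : γ < 1)
    (N : ℕ) (hN : 0 < N)
    (T : Fin N → Ω → (ℕ → S))
    (hmeas : ∀ i, Measurable (T i))
    (hindep : iIndepFun T μ)
    (hident : ∀ i, μ.map (T i) = μ.map (T ⟨0, hN⟩))
    (dD : S → Ω → ℝ)
    (hdD : ∀ s ω, dD s ω =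
      (1 / (N : ℝ)) * ∑ i : Fin N, ∑' t : ℕ, γ ^ t * (if T i ω t = s then (1 : ℝ) else 0))
    (d : S → ℝ)
    (hd : ∀ s, d s = ∑' t : ℕ, γ ^ t * (μ {ω | T ⟨0, hN⟩ ω t = s}).toReal) :
    ∀ ε > (0 : ℝ),
      μ {ω | ε ≤ (1 - γ) * ∑ s : S, |d s - dD s ω|} ≤
        ENNReal.ofReal ((2 ^ Fintype.card S - 2) * Real.exp (-((N : ℝ) * ε ^ 2) / 2)) := by
  intro ε hε
  have hd' (s : S) : d s = ∫ ω, discountedOccupancy γ {s} (T ⟨0, hN⟩ ω) ∂μ := by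
    rw [hd, integral_discountedOccupancy_comp hγ0 hγ1 (hmeas _)]
    simp [measureReal_def]
  have hdD' (s : S) (ω : Ω) :
      dD s ω = (Fintype.card (Fin N) : ℝ)⁻¹ * ∑ i, discountedOccupancy γ {s} (T i ω) := by
    simp [hdD, discountedOccupancy]
  have h_card : ((2 ^ Fintype.card S - 2 : ℕ) : ℝ) = 2 ^ Fintype.card S - 2 := by
    rw [Nat.cast_sub (Nat.le_self_pow Fintype.card_ne_zero 2), Nat.cast_pow, Nat.cast_ofNat]
  have := Fin.pos_iff_nonempty.1 hN
  rw [← h_card, ENNReal.ofReal_mul (Nat.cast_nonneg _), ENNReal.ofReal_natCast]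
  convert measure_sum_abs_integral_sub_empirical_discountedOccupancy_ge_le hγ0 hγ1 hmeas hindep
    (fun i ↦ ⟨(hmeas i).aemeasurable, (hmeas _).aemeasurable, hident i⟩) hε using 4
  · simp_rw [hd', hdD', abs_mul, abs_of_pos (sub_pos.2 hγ1), mul_sum]
  · simp
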